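/- Let H, Q₁,…,Q_m be mutually commuting Hermitian d×d matrices and λ₀,λ₁,…,λ_m ∈ ℝ, and let γ := exp(−λ₀H − Σ_{ℓ=1}^m λ_ℓ Q_ℓ) / Tr[exp(−λ₀H − Σ_{ℓ=1}^m λ_ℓ Q_ℓ)] be the associated generalized Gibbs ensemble on ℂ^d. Let (ρ_n)_n, with ρ_n a density matrix on (ℂ^d)^⊗n, be weakly almost i.i.d. along γ. Define H̄_n := (1/n) Σ_{i=1}^n H^(i) and Q̄_{ℓ,n} := (1/n) Σ_{i=1}^n Q_ℓ^(i). Then for every δ > 0, Tr[ρ_n · {|H̄_n − Tr(γH)·1_n| ≤ δ} · ∏_{ℓ=1}^m {|Q̄_{ℓ,n} − Tr(γQ_ℓ)·1_n| ≤ δ}] → 1 as n → ∞. -/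

import Mathlib

open scoped BigOperators ComplexOrder
open Matrix Filter

noncomputable section

/-- Square matrices on `ℂ^d`. -/
abbrev Mat (d : ℕ) := Matrix (Fin d) (Fin d) ℂ

/-- Operators on the `n`-fold tensor power `(ℂ^d)^⊗n`, identified with matrices indexed by
`Fin n → Fin d`. -/
abbrev MatN (d n : ℕ) := Matrix (Fin n → Fin d) (Fin n → Fin d) ℂ

/-- A density matrix: positive semidefinite with unit trace. -/
def IsDensity {m : Type*} [Fintype m] [DecidableEq m] (ρ : Matrix m m ℂ) : Prop :=
  ρ.PosSemidef ∧ ρ.trace = 1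

/-- The trace norm `‖X‖₁ = Tr √(XᴴX)`. -/
noncomputable def traceNorm {m : Type*} [Fintype m] [DecidableEq m] (X : Matrix m m ℂ) : ℝ :=
  (((Matrix.posSemidef_conjTranspose_mul_self X).1.eigenvectorUnitary : Matrix m m ℂ) *
    Matrix.diagonal (fun i => ((Real.sqrt ((Matrix.posSemidef_conjTranspose_mul_self X).1.eigenvalues i) : ℝ) : ℂ)) *
    star ((Matrix.posSemidef_conjTranspose_mul_self X).1.eigenvectorUnitary : Matrix m m ℂ)).trace.re

/-- The `n`-fold tensor power `ρ^⊗n`. -/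
def tpow {d : ℕ} (ρ : Mat d) (n : ℕ) : MatN d n := fun x y => ∏ i, ρ (x i) (y i)

/-- The tensor power of `ρ` over the sites in `I ⊆ [n]`. -/
def tpowOn {d n : ℕ} (ρ : Mat d) (I : Finset (Fin n)) :
    Matrix ((i : I) → Fin d) ((i : I) → Fin d) ℂ := fun x y => ∏ i, ρ (x i) (y i)

/-- Combine a configuration on `I` with a configuration on its complement. -/
def combine {α : Type*} {n : ℕ} (I : Finset (Fin n)) (x : (i : I) → α)
    (c : (j : {j : Fin n // j ∉ I}) → α) : Fin n → α :=
  fun j => if h : j ∈ I then x ⟨j, h⟩ else c ⟨j, h⟩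

/-- The marginal (partial trace over the sites outside `I`) of a state on `(ℂ^d)^⊗n`. -/
noncomputable def marginal {d n : ℕ} (ρn : MatN d n) (I : Finset (Fin n)) :
    Matrix ((i : I) → Fin d) ((i : I) → Fin d) ℂ :=
  fun x y => ∑ c : (j : {j : Fin n // j ∉ I}) → Fin d, ρn (combine I x c) (combine I y c)

/-- A sequence of states `ρ_n` on `(ℂ^d)^⊗n` is weakly almost i.i.d. along `ρ` if for each
fixed `k ≥ 1` the average over all `k`-element subsets `I ⊆ [n]` of
`‖(ρ_n)_I − ρ^⊗k‖₁` tends to `0` as `n → ∞`. -/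
def WeaklyAlmostIID {d : ℕ} (ρ : Mat d) (ρseq : ∀ n, MatN d n) : Prop :=
  ∀ k : ℕ, 0 < k →
    Tendsto (fun n : ℕ =>
        (∑ I ∈ Finset.powersetCard k (Finset.univ : Finset (Fin n)),
          traceNorm (marginal (ρseq n) I - tpowOn ρ I)) / (n.choose k : ℝ))
      atTop (nhds 0)

/-- `A^(i) = 1 ⊗ ⋯ ⊗ A ⊗ ⋯ ⊗ 1` with `A` in the `i`-th tensor factor. -/
def embedAt {d : ℕ} (n : ℕ) (A : Mat d) (i : Fin n) : MatN d n :=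
  fun x y => if ∀ j, j ≠ i → x j = y j then A (x i) (y i) else 0

/-- The empirical average `Ā_n = (1/n) Σ_i A^(i)`. -/
noncomputable def avgObs {d : ℕ} (n : ℕ) (A : Mat d) : MatN d n :=
  (n : ℂ)⁻¹ • ∑ i : Fin n, embedAt n A i

open Classical in
/-- The spectral projection of a Hermitian matrix `Q` onto the span of eigenvectors whose
eigenvalue satisfies the predicate `S` (junk value `0` if `Q` is not Hermitian). -/
noncomputable def specProj {m : Type*} [Fintype m] [DecidableEq m]
    (S : ℝ → Prop) (Q : Matrix m m ℂ) : Matrix m m ℂ :=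
  if hQ : Q.IsHermitian then
    (hQ.eigenvectorUnitary : Matrix m m ℂ) *
      Matrix.diagonal (fun i => if S (hQ.eigenvalues i) then (1 : ℂ) else 0) *
      star (hQ.eigenvectorUnitary : Matrix m m ℂ)
  else 0

open Classical in
/-- Functional calculus for a Hermitian matrix (junk value `0` if not Hermitian). -/
noncomputable def mfun {m : Type*} [Fintype m] [DecidableEq m]
    (f : ℝ → ℝ) (Q : Matrix m m ℂ) : Matrix m m ℂ :=
  if hQ : Q.IsHermitian then
    (hQ.eigenvectorUnitary : Matrix m m ℂ) *
      Matrix.diagonal (fun i => (f (hQ.eigenvalues i) : ℂ)) *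
      star (hQ.eigenvectorUnitary : Matrix m m ℂ)
  else 0

/-- The matrix logarithm (base 2) via functional calculus. -/
noncomputable def matLog {m : Type*} [Fintype m] [DecidableEq m] (Q : Matrix m m ℂ) :
    Matrix m m ℂ := mfun (Real.logb 2) Q

/-- The von Neumann entropy `S(ρ) = −Tr(ρ log ρ)` (base-2 logarithm, on the support). -/
noncomputable def vN {m : Type*} [Fintype m] [DecidableEq m] (ρ : Matrix m m ℂ) : ℝ :=
  -(Matrix.trace (ρ * matLog ρ)).re

/-- The operator norm `‖A‖_∞`. -/
noncomputable def opNorm {m : Type*} [Fintype m] [DecidableEq m] (A : Matrix m m ℂ) : ℝ :=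
  ‖Matrix.toEuclideanCLM (𝕜 := ℂ) A‖


end

/-!
Write `M_ℓ = Ā_ℓ - Tr(γ A_ℓ)` for the centred empirical averages of the observables
`A_0 = H` and `A_ℓ = Q_ℓ`. They are commuting Hermitian matrices, so their spectral projections
`P_ℓ = {|M_ℓ| ≤ δ}` are commuting projections, and two operator inequalities hold: the union
bound `1 - ∏ P_ℓ ≤ ∑ (1 - P_ℓ)` and Chebyshev's `1 - P_ℓ ≤ δ⁻² M_ℓ²`. Taking expectations in
`ρ_n` gives `0 ≤ 1 - Tr(ρ_n ∏ P_ℓ) ≤ δ⁻² ∑ Tr(ρ_n M_ℓ²)`, so it suffices that every variance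
`Tr(ρ_n M_ℓ²)` tends to `0`.

Expanding `M_ℓ² = n⁻² ∑_{i,j} B^(i) B^(j)` with `B = A_ℓ - Tr(γ A_ℓ)`, each term is the
expectation of a product observable in a one- or two-site marginal of `ρ_n`. Replacing that
marginal by `γ` or `γ ⊗ γ` costs its trace distance times a constant, and under `γ ⊗ γ` the
off-diagonal terms vanish because `Tr(γ B) = 0`. So the variance is at most `O(1/n)` plus the
averaged one- and two-site trace distances, which tend to `0` by weak almost-i.i.d.-ness.
-/

open scoped MatrixOrder Topology

section StarProjection

variable {R : Type*}

lemma isStarProjection_ofFn_prod [Semiring R] [StarRing R] {k : ℕ} {P : Fin k → R}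
    (hP : ∀ i, IsStarProjection (P i)) (hc : ∀ i j, Commute (P i) (P j)) :
    IsStarProjection (List.ofFn P).prod := by
  induction k with
  | zero => simp
  | succ k ih =>
    rw [List.ofFn_succ, List.prod_cons]
    refine (hP 0).mul (ih (fun i => hP i.succ) fun i j => hc i.succ j.succ) ?_
    exact Commute.list_prod_right _ _ fun b hb => by
      obtain ⟨i, rfl⟩ := List.mem_ofFn.mp hb
      exact hc 0 i.succ

lemma one_sub_ofFn_prod_le_sum [Ring R] [StarRing R] [PartialOrder R] [StarOrderedRing R]
    {k : ℕ} {P : Fin k → R} (hP : ∀ i, IsStarProjection (P i))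
    (hc : ∀ i j, Commute (P i) (P j)) : 1 - (List.ofFn P).prod ≤ ∑ i, (1 - P i) := by
  induction k with
  | zero => simp
  | succ k ih =>
    set W := (List.ofFn fun i => P i.succ).prod
    have hW : IsStarProjection W :=
      isStarProjection_ofFn_prod (fun i => hP i.succ) fun i j => hc i.succ j.succ
    have hPW : Commute (P 0) W := Commute.list_prod_right _ _ fun b hb => by
      obtain ⟨i, rfl⟩ := List.mem_ofFn.mp hb
      exact hc 0 i.succ
    have hcross : 0 ≤ (1 - P 0) * (1 - W) :=
      ((hP 0).one_sub.mul hW.one_sub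
        ((Commute.one_right _).sub_right ((Commute.one_left W).sub_left hPW))).nonneg
    rw [List.ofFn_succ, List.prod_cons, Fin.sum_univ_succ]
    calc 1 - P 0 * W = (1 - P 0) + (1 - W) - (1 - P 0) * (1 - W) := by noncomm_ring
      _ ≤ (1 - P 0) + (1 - W) := sub_le_self _ hcross
      _ ≤ (1 - P 0) + ∑ i : Fin k, (1 - P i.succ) := by
        gcongr
        exact ih (fun i => hP i.succ) fun i j => hc i.succ j.succ

end StarProjection

section SpectralProjection

variable {ι : Type*} [Fintype ι] [DecidableEq ι] {M N : Matrix ι ι ℂ}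

lemma Matrix.continuousOn_real_spectrum (M : Matrix ι ι ℂ) (f : ℝ → ℝ) :
    ContinuousOn f (spectrum ℝ M) :=
  M.finite_real_spectrum.continuousOn f

lemma mfun_eq_cfc (hM : M.IsHermitian) (f : ℝ → ℝ) : mfun f M = cfc f M := by
  rw [hM.cfc_eq, mfun, dif_pos hM, IsHermitian.cfc, Unitary.conjStarAlgAut_apply]
  rfl

open Classical in
lemma specProj_eq_cfc (hM : M.IsHermitian) (S : ℝ → Prop) :
    specProj S M = cfc (fun t => if S t then (1 : ℝ) else 0) M := by
  rw [hM.cfc_eq, specProj, dif_pos hM, IsHermitian.cfc, Unitary.conjStarAlgAut_apply]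
  congr 3
  funext i
  simp only [Function.comp_apply]
  split_ifs <;> simp

lemma isStarProjection_specProj (hM : M.IsHermitian) (S : ℝ → Prop) :
    IsStarProjection (specProj S M) := by
  classical
  rw [specProj_eq_cfc hM]
  refine ⟨?_, cfc_predicate _ M⟩
  rw [IsIdempotentElem, ← cfc_mul _ _ M (M.continuousOn_real_spectrum _)
    (M.continuousOn_real_spectrum _)]
  congr 1
  funext t
  split_ifs <;> simp

lemma Commute.specProj_left (h : Commute M N) (S : ℝ → Prop) : Commute (specProj S M) N := by
  classical
  by_cases hM : M.IsHermitian
  · rw [specProj_eq_cfc hM]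
    exact h.cfc_real _
  · simp [specProj, hM]

lemma one_sub_specProj_le (hM : M.IsHermitian) {δ : ℝ} (hδ : 0 < δ) :
    1 - specProj (fun t => |t| ≤ δ) M ≤ (δ ^ 2)⁻¹ • (M * M) := by
  classical
  have hc := M.continuousOn_real_spectrum
  rw [specProj_eq_cfc hM, ← cfc_one ℝ M, ← cfc_sub _ _ M (hc _) (hc _)]
  conv_rhs => rw [← cfc_id' ℝ M, ← cfc_mul _ _ M (hc _) (hc _), ← cfc_smul _ _ M (hc _)]
  refine cfc_mono (fun t _ => ?_) (hc _) (hc _)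
  simp only [Pi.one_apply, smul_eq_mul, ← sq]
  split_ifs with ht
  · simp only [sub_self]
    positivity
  · rw [sub_zero, ← sq_abs t, inv_mul_eq_div, one_le_div (by positivity)]
    exact pow_le_pow_left₀ hδ.le (not_le.mp ht).le 2

lemma Matrix.trace_mul_nonneg {ρ Z : Matrix ι ι ℂ} (hρ : 0 ≤ ρ) (hZ : 0 ≤ Z) :
    0 ≤ (ρ * Z).trace := by
  have hs : IsSelfAdjoint (CFC.sqrt ρ) := (CFC.sqrt_nonneg ρ).isSelfAdjoint
  rw [← CFC.sqrt_mul_sqrt_self ρ hρ, mul_assoc, trace_mul_comm, mul_assoc]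
  have := star_left_conjugate_nonneg hZ (CFC.sqrt ρ)
  rw [hs.star_eq] at this
  exact (Matrix.nonneg_iff_posSemidef.mp (by simpa [mul_assoc] using this)).trace_nonneg

lemma Matrix.trace_mul_le_trace_mul {ρ X Y : Matrix ι ι ℂ} (hρ : 0 ≤ ρ) (hXY : X ≤ Y) :
    (ρ * X).trace ≤ (ρ * Y).trace := by
  have := trace_mul_nonneg hρ (sub_nonneg.mpr hXY)
  rwa [mul_sub, trace_sub, sub_nonneg] at this

end SpectralProjection

section Density

variable {ι : Type*} [Fintype ι] [DecidableEq ι]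

lemma IsDensity.nonempty {ρ : Matrix ι ι ℂ} (hρ : IsDensity ρ) : Nonempty ι := by
  by_contra h
  have : IsEmpty ι := not_nonempty_iff.mp h
  simpa [trace] using hρ.2

lemma isDensity_inv_trace_smul {E : Matrix ι ι ℂ} (hE : E.PosSemidef) (hE0 : E ≠ 0) :
    IsDensity (E.trace⁻¹ • E) := by
  have htr : E.trace ≠ 0 := fun h => hE0 (hE.trace_eq_zero_iff.mp h)
  refine ⟨hE.smul (inv_nonneg.mpr hE.trace_nonneg), ?_⟩
  rw [trace_smul, smul_eq_mul, inv_mul_cancel₀ htr]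

lemma isDensity_gibbs [Nonempty ι] {N : Matrix ι ι ℂ} (hN : N.IsHermitian) :
    IsDensity ((mfun Real.exp N).trace⁻¹ • mfun Real.exp N) := by
  rw [mfun_eq_cfc hN]
  refine isDensity_inv_trace_smul
    (nonneg_iff_posSemidef.mp (cfc_nonneg fun t _ => (Real.exp_pos t).le)) ?_
  exact ((isUnit_cfc_iff _ N (N.continuousOn_real_spectrum _)).mpr
    fun t _ => (Real.exp_pos t).ne').ne_zero

lemma norm_one_sub_trace_mul_prod_specProj_le {ρ : Matrix ι ι ℂ} (hρ : IsDensity ρ) {k : ℕ}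
    {M : Fin k → Matrix ι ι ℂ} (hM : ∀ ℓ, (M ℓ).IsHermitian) (hc : ∀ ℓ ℓ', Commute (M ℓ) (M ℓ'))
    {δ : ℝ} (hδ : 0 < δ) :
    ‖1 - (ρ * (List.ofFn fun ℓ => specProj (fun t => |t| ≤ δ) (M ℓ)).prod).trace‖
      ≤ (δ ^ 2)⁻¹ * ∑ ℓ, ‖(ρ * (M ℓ * M ℓ)).trace‖ := by
  set P := fun ℓ => specProj (fun t => |t| ≤ δ) (M ℓ)
  have hP : ∀ ℓ, IsStarProjection (P ℓ) := fun ℓ => isStarProjection_specProj (hM ℓ) _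
  have hPc : ∀ ℓ ℓ', Commute (P ℓ) (P ℓ') := fun ℓ ℓ' =>
    (((hc ℓ' ℓ).specProj_left _).symm).specProj_left _
  have hρ0 : 0 ≤ ρ := nonneg_iff_posSemidef.mpr hρ.1
  have hlow := trace_mul_nonneg hρ0 (isStarProjection_ofFn_prod hP hPc).one_sub_nonneg
  have hup := trace_mul_le_trace_mul hρ0 ((one_sub_ofFn_prod_le_sum hP hPc).trans
    (Finset.sum_le_sum fun ℓ _ => one_sub_specProj_le (hM ℓ) hδ))
  rw [mul_sub, trace_sub, mul_one, hρ.2] at hlow hup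
  calc _ ≤ ‖(ρ * ∑ ℓ, (δ ^ 2)⁻¹ • (M ℓ * M ℓ)).trace‖ :=
        CStarAlgebra.norm_le_norm_of_nonneg_of_le hlow hup
    _ = ‖(δ ^ 2)⁻¹ • ∑ ℓ, (ρ * (M ℓ * M ℓ)).trace‖ := by
        simp only [Finset.mul_sum, trace_sum, mul_smul_comm, trace_smul, Finset.smul_sum]
    _ ≤ (δ ^ 2)⁻¹ * ∑ ℓ, ‖(ρ * (M ℓ * M ℓ)).trace‖ := by
        rw [norm_smul, Real.norm_of_nonneg (by positivity)]
        gcongr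
        exact norm_sum_le _ _

end Density

section TraceNorm

variable {ι : Type*} [Fintype ι] [DecidableEq ι] {σ : Matrix ι ι ℂ}

lemma Matrix.IsHermitian.trace_cfc (hσ : σ.IsHermitian) (f : ℝ → ℝ) :
    (cfc f σ).trace = ∑ i, (f (hσ.eigenvalues i) : ℂ) := by
  rw [hσ.cfc_eq, IsHermitian.cfc, Unitary.conjStarAlgAut_apply, trace_mul_cycle,
    Unitary.coe_star_mul_self, one_mul, trace_diagonal]
  rfl

lemma traceNorm_eq_trace_cfc_sqrt (X : Matrix ι ι ℂ) :
    traceNorm X = (cfc Real.sqrt (Xᴴ * X)).trace.re := by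
  rw [(isHermitian_conjTranspose_mul_self X).cfc_eq, IsHermitian.cfc,
    Unitary.conjStarAlgAut_apply]
  rfl

lemma Matrix.IsHermitian.traceNorm_eq (hσ : σ.IsHermitian) :
    traceNorm σ = ∑ i, |hσ.eigenvalues i| := by
  have hsq : σᴴ * σ = cfc (fun t : ℝ => t * t) σ := by
    rw [cfc_mul (fun t : ℝ => t) (fun t : ℝ => t) σ, cfc_id' ℝ σ, hσ.eq]
  rw [traceNorm_eq_trace_cfc_sqrt, hsq, ← cfc_comp Real.sqrt (fun t : ℝ => t * t) σ,
    hσ.trace_cfc]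
  simp only [Function.comp_apply, Real.sqrt_mul_self_eq_abs, ← Complex.ofReal_sum,
    Complex.ofReal_re]

lemma Matrix.IsHermitian.norm_apply_le_traceNorm (hσ : σ.IsHermitian) (x y : ι) :
    ‖σ x y‖ ≤ traceNorm σ := by
  set U : Matrix ι ι ℂ := (hσ.eigenvectorUnitary : Matrix ι ι ℂ)
  have hU : ∀ a b, ‖U a b‖ ≤ 1 := entry_norm_bound_of_unitary hσ.eigenvectorUnitary.2
  have hentry : σ x y = ∑ k, U x k * (hσ.eigenvalues k : ℂ) * star (U y k) := by
    conv_lhs => rw [hσ.spectral_theorem, Unitary.conjStarAlgAut_apply]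
    rw [mul_apply]
    simp only [mul_diagonal, star_apply, Function.comp_apply]
    rfl
  rw [hentry, hσ.traceNorm_eq]
  refine (norm_sum_le _ _).trans (Finset.sum_le_sum fun k _ => ?_)
  rw [norm_mul, norm_mul, norm_star, Complex.norm_real, Real.norm_eq_abs]
  calc ‖U x k‖ * |hσ.eigenvalues k| * ‖U y k‖ ≤ 1 * |hσ.eigenvalues k| * 1 := by
        gcongr
        exacts [hU x k, hU y k]
    _ = |hσ.eigenvalues k| := by ring

lemma Matrix.IsHermitian.norm_trace_mul_le (hσ : σ.IsHermitian) (X : Matrix ι ι ℂ) :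
    ‖(σ * X).trace‖ ≤ traceNorm σ * ∑ x, ∑ y, ‖X x y‖ := by
  simp only [trace, diag, mul_apply]
  calc ‖∑ x, ∑ y, σ x y * X y x‖ ≤ ∑ x, ∑ y, traceNorm σ * ‖X y x‖ := by
        refine (norm_sum_le _ _).trans (Finset.sum_le_sum fun x _ => ?_)
        refine (norm_sum_le _ _).trans (Finset.sum_le_sum fun y _ => ?_)
        rw [norm_mul]
        gcongr
        exact hσ.norm_apply_le_traceNorm x y
    _ = traceNorm σ * ∑ x, ∑ y, ‖X x y‖ := by
        rw [Finset.sum_comm, Finset.mul_sum]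
        simp only [Finset.mul_sum]

end TraceNorm

section Sites

variable {d n : ℕ}

/-- `Z^⊗I ⊗ 1`, with the identity on the sites outside `I`. -/
def embedOn (I : Finset (Fin n)) (Z : Mat d) : MatN d n :=
  fun x y => if ∀ j ∉ I, x j = y j then ∏ k : I, Z (x k) (y k) else 0

lemma embedOn_combine (I : Finset (Fin n)) (Z : Mat d) (a b : (i : I) → Fin d)
    (c c' : (j : {j : Fin n // j ∉ I}) → Fin d) :
    embedOn I Z (combine I a c) (combine I b c') = if c = c' then tpowOn Z I a b else 0 := by
  have hc : (∀ j ∉ I, combine I a c j = combine I b c' j) ↔ c = c' := by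
    simp only [combine, funext_iff, Subtype.forall]
    exact forall₂_congr fun j hj => by simp [hj]
  have hp : ∏ k : I, Z (combine I a c k) (combine I b c' k) = tpowOn Z I a b :=
    Finset.prod_congr rfl fun k _ => by simp [combine, k.2]
  exact if_congr hc hp rfl

lemma sum_eq_sum_combine {M : Type*} [AddCommMonoid M] (I : Finset (Fin n))
    (f : (Fin n → Fin d) → M) : ∑ x, f x = ∑ a, ∑ c, f (combine I a c) := by
  rw [← (Equiv.piEquivPiSubtypeProd (· ∈ I) fun _ => Fin d).symm.sum_comp, Fintype.sum_prod_type]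
  rfl

lemma trace_mul_embedOn (ρ : MatN d n) (I : Finset (Fin n)) (Z : Mat d) :
    (ρ * embedOn I Z).trace = (marginal ρ I * tpowOn Z I).trace := by
  simp only [trace, diag, mul_apply, marginal, Finset.sum_mul, sum_eq_sum_combine I]
  refine Finset.sum_congr rfl fun a _ => ?_
  rw [Finset.sum_comm]
  refine Finset.sum_congr rfl fun c _ => ?_
  rw [Finset.sum_comm]
  refine Finset.sum_congr rfl fun b _ => ?_
  simp only [embedOn_combine, mul_ite, mul_zero, Finset.sum_ite_eq, Finset.mem_univ, if_true]

lemma embedAt_eq_embedOn (A : Mat d) (i : Fin n) : embedAt n A i = embedOn {i} A := by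
  ext x y
  have hval : ∏ k : ({i} : Finset (Fin n)), A (x k) (y k) = A (x i) (y i) := by
    rw [Finset.prod_coe_sort (f := fun k => A (x k) (y k)), Finset.prod_singleton]
  simp only [embedAt, embedOn, hval, Finset.mem_singleton]

lemma embedAt_sub (A B : Mat d) (i : Fin n) :
    embedAt n (A - B) i = embedAt n A i - embedAt n B i := by
  ext x y
  simp only [embedAt, Matrix.sub_apply]
  split_ifs <;> simp

lemma embedAt_smul (c : ℂ) (A : Mat d) (i : Fin n) : embedAt n (c • A) i = c • embedAt n A i := by
  ext x y
  simp only [embedAt, Matrix.smul_apply]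
  split_ifs <;> simp

lemma embedAt_one (i : Fin n) : embedAt n (1 : Mat d) i = 1 := by
  ext x y
  by_cases h : ∀ j, j ≠ i → x j = y j
  · have hxy : x i = y i ↔ x = y := ⟨fun hi => funext fun j =>
      if hj : j = i then hj ▸ hi else h j hj, fun hxy => hxy ▸ rfl⟩
    simp only [embedAt, one_apply, if_pos h]
    exact if_congr hxy rfl rfl
  · have hxy : x ≠ y := fun hxy => h fun j _ => hxy ▸ rfl
    simp [embedAt, one_apply, h, hxy]

lemma mul_embedAt_apply (X : MatN d n) (A : Mat d) (i : Fin n) (x y : Fin n → Fin d) :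
    (X * embedAt n A i) x y = ∑ b, X x (Function.update y i b) * A b (y i) := by
  have hmem : ∀ z, (∀ j, j ≠ i → z j = y j) → z ∈ Finset.univ.image (Function.update y i) :=
    fun z hz => Finset.mem_image.mpr ⟨z i, Finset.mem_univ _, funext fun j => by
      by_cases hj : j = i
      · subst hj; simp
      · simp [hj, hz j hj]⟩
  rw [mul_apply, ← Finset.sum_subset (Finset.subset_univ _) fun z _ hz => ?_,
    Finset.sum_image fun a _ b _ h => Function.update_injective y i h]
  · refine Finset.sum_congr rfl fun b _ => ?_
    simp only [embedAt, Function.update_self]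
    rw [if_pos fun j hj => Function.update_of_ne hj _ _]
  · simp only [embedAt]
    rw [if_neg fun h => hz (hmem z h), mul_zero]

lemma embedAt_mul_embedAt_self (A B : Mat d) (i : Fin n) :
    embedAt n A i * embedAt n B i = embedAt n (A * B) i := by
  ext x y
  have hc : ∀ b, (∀ j, j ≠ i → x j = Function.update y i b j) ↔ ∀ j, j ≠ i → x j = y j :=
    fun b => forall₂_congr fun j hj => by rw [Function.update_of_ne hj]
  simp only [mul_embedAt_apply, embedAt, hc, Function.update_self]
  split_ifs <;> simp [mul_apply]

lemma embedAt_mul_embedAt_apply_of_ne (A B : Mat d) {i j : Fin n} (hij : i ≠ j)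
    (x y : Fin n → Fin d) :
    (embedAt n A i * embedAt n B j) x y
      = if ∀ k, k ≠ i → k ≠ j → x k = y k then A (x i) (y i) * B (x j) (y j) else 0 := by
  rw [mul_embedAt_apply, Finset.sum_eq_single (x j)]
  · have hc : (∀ k, k ≠ i → x k = Function.update y j (x j) k)
        ↔ ∀ k, k ≠ i → k ≠ j → x k = y k := by
      refine forall₂_congr fun k hki => ?_
      by_cases hkj : k = j
      · subst hkj; simp
      · simp [hkj]
    simp only [embedAt, hc, Function.update_of_ne hij]
    split_ifs <;> simp
  · intro b _ hb
    simp only [embedAt]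
    rw [if_neg fun h => hb (by simpa using (h j (Ne.symm hij)).symm), zero_mul]
  · simp

lemma embedAt_mul_embedAt_of_ne (A : Mat d) {i j : Fin n} (hij : i ≠ j) :
    embedAt n A i * embedAt n A j = embedOn {i, j} A := by
  ext x y
  have hval : ∏ k : ({i, j} : Finset (Fin n)), A (x k) (y k) = A (x i) (y i) * A (x j) (y j) := by
    rw [Finset.prod_coe_sort (f := fun k => A (x k) (y k)), Finset.prod_pair hij]
  rw [embedAt_mul_embedAt_apply_of_ne A A hij, embedOn, hval]
  simp only [Finset.mem_insert, Finset.mem_singleton, not_or, and_imp]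

lemma Commute.embedAt {A B : Mat d} (h : Commute A B) (i j : Fin n) :
    Commute (embedAt n A i) (embedAt n B j) := by
  by_cases hij : i = j
  · subst hij
    simp only [Commute, SemiconjBy, embedAt_mul_embedAt_self, h.eq]
  · ext x y
    rw [embedAt_mul_embedAt_apply_of_ne A B hij, embedAt_mul_embedAt_apply_of_ne B A (Ne.symm hij),
      mul_comm]
    exact if_congr ⟨fun h k hj hi => h k hi hj, fun h k hi hj => h k hj hi⟩ rfl rfl

lemma sum_sum_prod_pi {ι α R : Type*} [Fintype ι] [DecidableEq ι] [Fintype α] [CommSemiring R]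
    (g : α → α → R) :
    ∑ x : ι → α, ∑ y : ι → α, ∏ k, g (x k) (y k) = (∑ a, ∑ b, g a b) ^ Fintype.card ι := by
  simp only [← Fintype.prod_sum]
  rw [← Fintype.prod_sum fun (_ : ι) a => ∑ b, g a b, Finset.prod_const, Finset.card_univ]

lemma trace_tpowOn_mul_tpowOn (γ Z : Mat d) (I : Finset (Fin n)) :
    (tpowOn γ I * tpowOn Z I).trace = (γ * Z).trace ^ I.card := by
  simp only [trace, diag, mul_apply, tpowOn, ← Finset.prod_mul_distrib]
  rw [sum_sum_prod_pi (fun a b => γ a b * Z b a), Fintype.card_coe]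

lemma sum_norm_tpowOn (Z : Mat d) (I : Finset (Fin n)) :
    ∑ x, ∑ y, ‖tpowOn Z I x y‖ = (∑ a, ∑ b, ‖Z a b‖) ^ I.card := by
  simp only [tpowOn, norm_prod]
  rw [sum_sum_prod_pi (fun a b => ‖Z a b‖), Fintype.card_coe]

lemma Matrix.IsHermitian.tpowOn {γ : Mat d} (hγ : γ.IsHermitian) (I : Finset (Fin n)) :
    (tpowOn γ I).IsHermitian := by
  ext x y
  simp only [conjTranspose_apply, _root_.tpowOn, star_prod]
  exact Finset.prod_congr rfl fun k _ => by rw [← conjTranspose_apply, hγ.eq]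

lemma Matrix.IsHermitian.marginal {ρ : MatN d n} (hρ : ρ.IsHermitian) (I : Finset (Fin n)) :
    (marginal ρ I).IsHermitian := by
  ext x y
  simp only [conjTranspose_apply, _root_.marginal, star_sum]
  exact Finset.sum_congr rfl fun c _ => by rw [← conjTranspose_apply, hρ.eq]

end Sites

section Combinatorics

variable {α E M : Type*} [DecidableEq α]

lemma Finset.norm_sum_sum_le_diag_add_offDiag [SeminormedAddCommGroup E] (s : Finset α)
    (f : α → α → E) :
    ‖∑ i ∈ s, ∑ j ∈ s, f i j‖ ≤ ∑ i ∈ s, ‖f i i‖ + ∑ p ∈ s.offDiag, ‖f p.1 p.2‖ := by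
  rw [← Finset.sum_product', ← Finset.diag_union_offDiag,
    Finset.sum_union (Finset.disjoint_diag_offDiag s), Finset.sum_diag]
  exact (norm_add_le _ _).trans (add_le_add (norm_sum_le _ _) (norm_sum_le _ _))

lemma Finset.sum_offDiag_pair_eq_two_nsmul [AddCommMonoid M] (s : Finset α) (g : Finset α → M) :
    ∑ p ∈ s.offDiag, g {p.1, p.2} = 2 • ∑ I ∈ s.powersetCard 2, g I := by
  have hmaps : ∀ p ∈ s.offDiag, ({p.1, p.2} : Finset α) ∈ s.powersetCard 2 := fun p hp => by
    obtain ⟨h1, h2, h12⟩ := Finset.mem_offDiag.mp hp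
    exact Finset.mem_powersetCard.mpr ⟨Finset.insert_subset h1 (Finset.singleton_subset_iff.mpr h2),
      Finset.card_pair h12⟩
  rw [← Finset.sum_fiberwise_of_maps_to hmaps, Finset.smul_sum]
  refine Finset.sum_congr rfl fun I hI => ?_
  obtain ⟨hIs, hIc⟩ := Finset.mem_powersetCard.mp hI
  obtain ⟨a, b, hab, rfl⟩ := Finset.card_eq_two.mp hIc
  have hfiber : {p ∈ s.offDiag | ({p.1, p.2} : Finset α) = {a, b}} = {(a, b), (b, a)} := by
    ext ⟨u, v⟩
    have ha : a ∈ s := hIs (by simp)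
    have hb : b ∈ s := hIs (by simp)
    simp only [Finset.mem_filter, Finset.mem_offDiag, ← Finset.coe_inj, Finset.coe_pair,
      Set.pair_eq_pair_iff, Finset.mem_insert, Finset.mem_singleton, Prod.mk.injEq]
    constructor
    · exact And.right
    · rintro (⟨rfl, rfl⟩ | ⟨rfl, rfl⟩)
      exacts [⟨⟨ha, hb, hab⟩, .inl ⟨rfl, rfl⟩⟩, ⟨⟨hb, ha, hab.symm⟩, .inr ⟨rfl, rfl⟩⟩]
  rw [Finset.sum_congr rfl fun p hp => congrArg g (Finset.mem_filter.mp hp).2, Finset.sum_const,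
    hfiber, Finset.card_pair (by simp [hab])]

end Combinatorics

section Observables

variable {d n : ℕ}

lemma avgObs_sub_smul_one (hn : n ≠ 0) (A : Mat d) (a : ℂ) :
    avgObs n A - a • 1 = (n : ℂ)⁻¹ • ∑ i, embedAt n (A - a • 1) i := by
  have hn' : (n : ℂ) ≠ 0 := Nat.cast_ne_zero.mpr hn
  simp only [embedAt_sub, embedAt_smul, embedAt_one, Finset.sum_sub_distrib, Finset.sum_const,
    Finset.card_univ, Fintype.card_fin, smul_sub, avgObs, ← Nat.cast_smul_eq_nsmul ℂ, smul_smul,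
    inv_mul_cancel_left₀ hn']

lemma Matrix.IsHermitian.embedAt {A : Mat d} (hA : A.IsHermitian) (i : Fin n) :
    (embedAt n A i).IsHermitian := by
  ext x y
  simp only [conjTranspose_apply, _root_.embedAt, eq_comm (a := x _) (b := y _)]
  split_ifs <;> simp [← conjTranspose_apply, hA.eq]

lemma Matrix.IsHermitian.avgObs {A : Mat d} (hA : A.IsHermitian) : (avgObs n A).IsHermitian :=
  IsSelfAdjoint.smul (by simp [IsSelfAdjoint])
    (isSelfAdjoint_sum _ fun i _ => (hA.embedAt i).isSelfAdjoint)

lemma Commute.avgObs {A B : Mat d} (h : Commute A B) : Commute (avgObs n A) (avgObs n B) :=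
  ((Commute.sum_left _ _ _ fun i _ => Commute.sum_right _ _ _ fun j _ =>
    h.embedAt i j).smul_left _).smul_right _

lemma Matrix.isSelfAdjoint_trace_mul {ι : Type*} [Fintype ι] {X Y : Matrix ι ι ℂ}
    (hX : X.IsHermitian) (hY : Y.IsHermitian) : IsSelfAdjoint (X * Y).trace := by
  rw [IsSelfAdjoint, ← trace_conjTranspose, conjTranspose_mul, hX.eq, hY.eq, trace_mul_comm]

end Observables

section Variance

variable {d n : ℕ} {γ : Mat d}

noncomputable def avgMarginalDist (γ : Mat d) (ρ : MatN d n) (k : ℕ) : ℝ :=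
  (∑ I ∈ Finset.powersetCard k (Finset.univ : Finset (Fin n)),
    traceNorm (marginal ρ I - tpowOn γ I)) / (n.choose k : ℝ)

lemma sum_powersetCard_traceNorm_eq (ρ : MatN d n) {k : ℕ} (hk : k ≤ n) :
    ∑ I ∈ Finset.powersetCard k (Finset.univ : Finset (Fin n)),
      traceNorm (marginal ρ I - tpowOn γ I) = n.choose k * avgMarginalDist γ ρ k := by
  rw [avgMarginalDist, mul_div_cancel₀ _ (Nat.cast_ne_zero.mpr (Nat.choose_pos hk).ne')]

lemma norm_trace_mul_embedOn_le {ρ : MatN d n} (hρ : ρ.IsHermitian) (hγ : γ.IsHermitian)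
    (I : Finset (Fin n)) (Z : Mat d) :
    ‖(ρ * embedOn I Z).trace‖ ≤ traceNorm (marginal ρ I - tpowOn γ I)
      * (∑ a, ∑ b, ‖Z a b‖) ^ I.card + ‖(γ * Z).trace‖ ^ I.card := by
  have hsplit : marginal ρ I * tpowOn Z I
      = (marginal ρ I - tpowOn γ I) * tpowOn Z I + tpowOn γ I * tpowOn Z I := by
    rw [sub_mul, sub_add_cancel]
  rw [trace_mul_embedOn, hsplit, trace_add, trace_tpowOn_mul_tpowOn, ← sum_norm_tpowOn,
    ← norm_pow]
  exact (norm_add_le _ _).trans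
    (add_le_add_left (((hρ.marginal I).sub (hγ.tpowOn I)).norm_trace_mul_le _) _)

lemma norm_trace_mul_sum_embedAt_sq_le {ρ : MatN d n} (hρ : ρ.IsHermitian) (hγ : γ.IsHermitian)
    {B : Mat d} (hB : (γ * B).trace = 0) (hn : 2 ≤ n) :
    ‖(ρ * ((∑ i, embedAt n B i) * (∑ i, embedAt n B i))).trace‖
      ≤ n * ((∑ a, ∑ b, ‖(B * B) a b‖) * avgMarginalDist γ ρ 1 + ‖(γ * (B * B)).trace‖)
        + n * (n - 1) * ((∑ a, ∑ b, ‖B a b‖) ^ 2 * avgMarginalDist γ ρ 2) := by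
  have hdiag : ∀ i : Fin n, ‖(ρ * (embedAt n B i * embedAt n B i)).trace‖
      ≤ traceNorm (marginal ρ {i} - tpowOn γ {i}) * (∑ a, ∑ b, ‖(B * B) a b‖)
        + ‖(γ * (B * B)).trace‖ := fun i => by
    rw [embedAt_mul_embedAt_self, embedAt_eq_embedOn]
    simpa using norm_trace_mul_embedOn_le hρ hγ {i} (B * B)
  have hoff : ∀ p ∈ (Finset.univ : Finset (Fin n)).offDiag,
      ‖(ρ * (embedAt n B p.1 * embedAt n B p.2)).trace‖
        ≤ (∑ a, ∑ b, ‖B a b‖) ^ 2 * traceNorm (marginal ρ {p.1, p.2} - tpowOn γ {p.1, p.2}) :=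
    fun p hp => by
      have hp12 := (Finset.mem_offDiag.mp hp).2.2
      simpa [embedAt_mul_embedAt_of_ne B hp12, hB, Finset.card_pair hp12, mul_comm] using
        norm_trace_mul_embedOn_le hρ hγ {p.1, p.2} B
  have hS1 := sum_powersetCard_traceNorm_eq (γ := γ) ρ (k := 1) (by omega)
  have hS2 := sum_powersetCard_traceNorm_eq (γ := γ) ρ hn
  rw [Finset.powersetCard_one, Finset.sum_map, Nat.choose_one_right] at hS1
  rw [Nat.cast_choose_two] at hS2
  rw [Finset.sum_mul_sum]
  simp only [Finset.mul_sum, trace_sum]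
  refine (Finset.norm_sum_sum_le_diag_add_offDiag _ _).trans (add_le_add ?_ ?_)
  · refine (Finset.sum_le_sum fun i _ => hdiag i).trans (le_of_eq ?_)
    rw [Finset.sum_add_distrib, ← Finset.sum_mul, Finset.sum_const, Finset.card_univ,
      Fintype.card_fin, nsmul_eq_mul]
    simp only [Function.Embedding.coeFn_mk] at hS1
    rw [hS1]
    ring
  · refine (Finset.sum_le_sum hoff).trans (le_of_eq ?_)
    rw [← Finset.mul_sum, Finset.sum_offDiag_pair_eq_two_nsmul Finset.univ
      fun I => traceNorm (marginal ρ I - tpowOn γ I), hS2, nsmul_eq_mul]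
    ring

end Variance

section Concentration

variable {d : ℕ} {γ : Mat d} {ρseq : ∀ n, MatN d n}

theorem tendsto_trace_mul_sq_avgObs_sub (hγ : IsDensity γ) (hρ : ∀ n, (ρseq n).IsHermitian)
    (hw : WeaklyAlmostIID γ ρseq) (A : Mat d) :
    Tendsto (fun n => (ρseq n * ((avgObs n A - (γ * A).trace • 1)
      * (avgObs n A - (γ * A).trace • 1))).trace) atTop (𝓝 0) := by
  set B := A - (γ * A).trace • (1 : Mat d)
  have hB : (γ * B).trace = 0 := by simp [B, mul_sub, hγ.2]
  set K₁ := ∑ a, ∑ b, ‖B a b‖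
  set K₂ := ∑ a, ∑ b, ‖(B * B) a b‖
  set c := ‖(γ * (B * B)).trace‖
  have hbound : ∀ n ≥ 2, ‖(ρseq n * ((avgObs n A - (γ * A).trace • 1)
      * (avgObs n A - (γ * A).trace • 1))).trace‖
      ≤ (n : ℝ)⁻¹ * (K₂ * avgMarginalDist γ (ρseq n) 1 + c)
        + (1 - (n : ℝ)⁻¹) * (K₁ ^ 2 * avgMarginalDist γ (ρseq n) 2) := fun n hn => by
    have hn0 : (n : ℝ) ≠ 0 := by positivity
    rw [avgObs_sub_smul_one (by omega), smul_mul_smul, mul_smul_comm, trace_smul, norm_smul,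
      norm_mul, norm_inv, Complex.norm_natCast]
    calc _ ≤ (n : ℝ)⁻¹ * (n : ℝ)⁻¹ * (n * (K₂ * avgMarginalDist γ (ρseq n) 1 + c)
          + n * (n - 1) * (K₁ ^ 2 * avgMarginalDist γ (ρseq n) 2)) := by
          gcongr
          exact norm_trace_mul_sum_embedAt_sq_le (hρ n) hγ.1.1 hB hn
      _ = _ := by field_simp
  have hlim : Tendsto (fun n : ℕ => (n : ℝ)⁻¹ * (K₂ * avgMarginalDist γ (ρseq n) 1 + c)
      + (1 - (n : ℝ)⁻¹) * (K₁ ^ 2 * avgMarginalDist γ (ρseq n) 2)) atTop (𝓝 0) := by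
    have h0 := tendsto_inv_atTop_nhds_zero_nat (𝕜 := ℝ)
    have h1 : Tendsto (fun n => avgMarginalDist γ (ρseq n) 1) atTop (𝓝 0) := hw 1 one_pos
    have h2 : Tendsto (fun n => avgMarginalDist γ (ρseq n) 2) atTop (𝓝 0) := hw 2 two_pos
    simpa only [mul_zero, zero_mul, add_zero] using (h0.mul ((h1.const_mul K₂).add_const c)).add
      (((tendsto_const_nhds (x := (1 : ℝ))).sub h0).mul (h2.const_mul (K₁ ^ 2)))
  exact squeeze_zero_norm' (eventually_atTop.mpr ⟨2, hbound⟩) hlim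

theorem tendsto_trace_mul_prod_specProj {k : ℕ} {obs : Fin k → Mat d}
    (hobs : ∀ ℓ, (obs ℓ).IsHermitian) (hc : ∀ ℓ ℓ', Commute (obs ℓ) (obs ℓ'))
    (hγ : IsDensity γ) (hdens : ∀ n, IsDensity (ρseq n)) (hw : WeaklyAlmostIID γ ρseq)
    {δ : ℝ} (hδ : 0 < δ) :
    Tendsto (fun n => (ρseq n * (List.ofFn fun ℓ => specProj (fun t => |t| ≤ δ)
      (avgObs n (obs ℓ) - (γ * obs ℓ).trace • 1)).prod).trace) atTop (𝓝 1) := by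
  have hM : ∀ n ℓ, (avgObs n (obs ℓ) - (γ * obs ℓ).trace • 1).IsHermitian := fun n ℓ =>
    (hobs ℓ).avgObs.sub (isHermitian_one.smul (isSelfAdjoint_trace_mul hγ.1.1 (hobs ℓ)))
  have hMc : ∀ n ℓ ℓ', Commute (avgObs n (obs ℓ) - (γ * obs ℓ).trace • 1)
      (avgObs n (obs ℓ') - (γ * obs ℓ').trace • 1) := fun n ℓ ℓ' =>
    (((hc ℓ ℓ').avgObs.sub_right ((Commute.one_right _).smul_right _)).sub_left
      ((Commute.one_left _).smul_left _))
  have hvar : Tendsto (fun n => (δ ^ 2)⁻¹ * ∑ ℓ, ‖(ρseq n * ((avgObs n (obs ℓ)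
      - (γ * obs ℓ).trace • 1) * (avgObs n (obs ℓ) - (γ * obs ℓ).trace • 1))).trace‖)
      atTop (𝓝 0) := by
    simpa using (tendsto_finsetSum _ fun ℓ _ => (tendsto_trace_mul_sq_avgObs_sub hγ
      (fun n => (hdens n).1.1) hw (obs ℓ)).norm).const_mul (δ ^ 2)⁻¹
  refine tendsto_iff_norm_sub_tendsto_zero.mpr (squeeze_zero (fun _ => norm_nonneg _)
    (fun n => ?_) hvar)
  rw [norm_sub_rev]
  exact norm_one_sub_trace_mul_prod_specProj_le (hdens n) (hM n) (hMc n) hδ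

end Concentration

theorem stmt_12 {d : ℕ} (m : ℕ) (H : Mat d) (Q : Fin m → Mat d)
    (hH : H.IsHermitian) (hQ : ∀ ℓ, (Q ℓ).IsHermitian)
    (hHQ : ∀ ℓ, Commute H (Q ℓ)) (hQQ : ∀ ℓ ℓ', Commute (Q ℓ) (Q ℓ'))
    (lam0 : ℝ) (lam : Fin m → ℝ) (γ : Mat d)
    (hγ : γ = (Matrix.trace (mfun Real.exp (-(lam0 • H + ∑ ℓ, lam ℓ • Q ℓ))))⁻¹ •
        mfun Real.exp (-(lam0 • H + ∑ ℓ, lam ℓ • Q ℓ)))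
    (ρseq : ∀ n, MatN d n) (hdens : ∀ n, IsDensity (ρseq n))
    (hwaiid : WeaklyAlmostIID γ ρseq) (δ : ℝ) (hδ : 0 < δ) :
    Tendsto (fun n => Matrix.trace (ρseq n *
        (specProj (fun t => |t| ≤ δ) (avgObs n H - Matrix.trace (γ * H) • 1) *
          (List.ofFn (fun ℓ => specProj (fun t => |t| ≤ δ)
            (avgObs n (Q ℓ) - Matrix.trace (γ * Q ℓ) • 1))).prod)))
      atTop (nhds 1) := by
  have : Nonempty (Fin d) := ⟨(hdens 1).nonempty.some 0⟩
  have hN : (-(lam0 • H + ∑ ℓ, lam ℓ • Q ℓ)).IsHermitian :=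
    (((IsSelfAdjoint.all lam0).smul hH.isSelfAdjoint).add (isSelfAdjoint_sum _ fun ℓ _ =>
      (IsSelfAdjoint.all (lam ℓ)).smul (hQ ℓ).isSelfAdjoint)).neg
  set obs : Fin (m + 1) → Mat d := Fin.cons H Q
  have hobs : ∀ ℓ, (obs ℓ).IsHermitian := Fin.cases hH hQ
  have hc : ∀ ℓ ℓ', Commute (obs ℓ) (obs ℓ') := by
    intro ℓ ℓ'
    cases ℓ using Fin.cases <;> cases ℓ' using Fin.cases <;> simp [obs, hHQ, (hHQ _).symm, hQQ]
  simpa [obs, List.ofFn_succ] using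
    tendsto_trace_mul_prod_specProj hobs hc (hγ ▸ isDensity_gibbs hN) hdens hwaiid hδ
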